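/- For every positive integer m, the hafnian of the integer matrix T_{2,1} of order 2m (zero diagonal, entries 2 on the subdiagonal and superdiagonal, and entries 1 elsewhere off the diagonal) equals Σ_{k=0}^{m} (m+k)!/(k!·(m−k)!·2^k); in particular, for m = 1, 2, 3, 4, 5, 6 these values are 2, 7, 37, 266, 2431, 27007. -/

import Mathlib

/-- The hafnian of a matrix over a linearly ordered finite index type:
the sum over all fixed-point-free involutions `σ` of the product of the
entries `A i (σ i)`, taken over one representative `i < σ i` of each orbit. -/
def hafnian {ι : Type*} [Fintype ι] [LinearOrder ι] {R : Type*} [CommSemiring R]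
    (A : Matrix ι ι R) : R :=
  ∑ σ ∈ Finset.univ.filter
      (fun σ : Equiv.Perm ι => σ * σ = 1 ∧ ∀ i, σ i ≠ i),
    ∏ i ∈ Finset.univ.filter (fun i => i < σ i), A i (σ i)

/-- The integer Toeplitz matrix `T_{2,1}` of order `2m`: zero diagonal, entries `2` on
the sub- and superdiagonal, and entries `1` elsewhere. -/
def T21 (m : ℕ) : Matrix (Fin (2 * m)) (Fin (2 * m)) ℤ :=
  fun i j =>
    if i = j then 0
    else if (i : ℕ) + 1 = (j : ℕ) ∨ (j : ℕ) + 1 = (i : ℕ) then 2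
    else 1

/-!
Let `H c n` be the hafnian of the order-`n` matrix with zero diagonal, entries `c` between
consecutive indices and `1` elsewhere, so that `T_{2,1}` of order `2m` gives `H 2 (2m)`.
Expanding along the first row, and splitting the perfect matchings according to whether they
use a given path edge `{p, p+1}`, yields `H c (n+4) = (n+3) H c (n+2) + (c-1)² H c n`.
For `c = 2` this is the recurrence `y (m+2) = (2m+3) y (m+1) + y m` satisfied by the values
`y m = ∑ₖ (m+k)!/(k!(m-k)!2^k)` of the Bessel polynomials at `1`, with the same initial values.
-/

open Finset Function Equiv

section RangeEqCompl

variable {α β : Type*} {f : α → β} {u v : β}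

lemma apply_ne_left_of_range_eq_compl (hr : Set.range f = {u, v}ᶜ) (a : α) : f a ≠ u :=
  fun h => by simpa [h] using hr.le (Set.mem_range_self a)

lemma apply_ne_right_of_range_eq_compl (hr : Set.range f = {u, v}ᶜ) (a : α) : f a ≠ v :=
  fun h => by simpa [h] using hr.le (Set.mem_range_self a)

lemma left_notMem_range_of_eq_compl (hr : Set.range f = {u, v}ᶜ) : u ∉ Set.range f := by
  simp [hr]

lemma right_notMem_range_of_eq_compl (hr : Set.range f = {u, v}ᶜ) : v ∉ Set.range f := by
  simp [hr]

lemma eq_or_eq_or_mem_range_of_eq_compl (hr : Set.range f = {u, v}ᶜ) (x : β) :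
    x = u ∨ x = v ∨ x ∈ Set.range f := by
  rw [hr, Set.mem_compl_iff, Set.mem_insert_iff, Set.mem_singleton_iff]
  tauto

end RangeEqCompl

section Pairings

variable {ι R : Type*} [Fintype ι] [LinearOrder ι] [CommSemiring R]

variable (ι) in
def pairings : Finset (Perm ι) := univ.filter fun σ : Perm ι => σ * σ = 1 ∧ ∀ i, σ i ≠ i

def matchingWeight (A : Matrix ι ι R) (σ : Perm ι) : R :=
  ∏ i ∈ univ.filter (fun i => i < σ i), A i (σ i)

lemma hafnian_eq_sum_pairings (A : Matrix ι ι R) :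
    hafnian A = ∑ σ ∈ pairings ι, matchingWeight A σ := rfl

@[simp] lemma mem_pairings {σ : Perm ι} : σ ∈ pairings ι ↔ σ * σ = 1 ∧ ∀ i, σ i ≠ i := by
  simp [pairings]

lemma apply_apply_of_mem_pairings {σ : Perm ι} (hσ : σ ∈ pairings ι) (x : ι) : σ (σ x) = x :=
  congr($((mem_pairings.1 hσ).1) x)

lemma hafnian_of_isEmpty [IsEmpty ι] (A : Matrix ι ι R) : hafnian A = 1 := by
  simp [hafnian_eq_sum_pairings, pairings, matchingWeight, univ_unique, filter_singleton]

end Pairings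

section ExtendPairing

variable {ι κ R : Type*} [LinearOrder ι] [Fintype κ] [LinearOrder κ] {u v : ι} {f : κ ↪o ι}

variable (u v f) in
def extendPairing (τ : Perm κ) : Perm ι :=
  swap u v * τ.viaFintypeEmbedding f.toEmbedding

lemma extendPairing_apply_image (hr : Set.range f = {u, v}ᶜ) (τ : Perm κ) (i : κ) :
    extendPairing u v f τ (f i) = f (τ i) := by
  rw [extendPairing, Perm.mul_apply, show f i = f.toEmbedding i from rfl,
    Perm.viaFintypeEmbedding_apply_image]
  exact swap_apply_of_ne_of_ne (apply_ne_left_of_range_eq_compl hr _)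
    (apply_ne_right_of_range_eq_compl hr _)

lemma extendPairing_apply_left (hr : Set.range f = {u, v}ᶜ) (τ : Perm κ) :
    extendPairing u v f τ u = v := by
  rw [extendPairing, Perm.mul_apply,
    Perm.viaFintypeEmbedding_apply_notMem_range _ _ (left_notMem_range_of_eq_compl hr),
    swap_apply_left]

lemma extendPairing_apply_right (hr : Set.range f = {u, v}ᶜ) (τ : Perm κ) :
    extendPairing u v f τ v = u := by
  rw [extendPairing, Perm.mul_apply,
    Perm.viaFintypeEmbedding_apply_notMem_range _ _ (right_notMem_range_of_eq_compl hr),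
    swap_apply_right]

lemma extendPairing_injective (hr : Set.range f = {u, v}ᶜ) :
    Injective (extendPairing u v f) := fun τ₁ τ₂ h =>
  Perm.ext fun i => f.injective <| by
    rw [← extendPairing_apply_image hr, ← extendPairing_apply_image hr, h]

variable [Fintype ι] [CommSemiring R]

lemma extendPairing_mem_pairings (hr : Set.range f = {u, v}ᶜ) (huv : u ≠ v) {τ : Perm κ}
    (hτ : τ ∈ pairings κ) : extendPairing u v f τ ∈ pairings ι := by
  refine mem_pairings.2 ⟨Perm.ext fun x => ?_, fun x => ?_⟩ <;>
    obtain rfl | rfl | ⟨i, rfl⟩ := eq_or_eq_or_mem_range_of_eq_compl hr x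
  · simp [extendPairing_apply_left hr, extendPairing_apply_right hr]
  · simp [extendPairing_apply_left hr, extendPairing_apply_right hr]
  · simp [extendPairing_apply_image hr, apply_apply_of_mem_pairings hτ]
  · simpa [extendPairing_apply_left hr] using huv.symm
  · simpa [extendPairing_apply_right hr] using huv
  · simpa [extendPairing_apply_image hr] using (mem_pairings.1 hτ).2 i

lemma exists_extendPairing_eq (hr : Set.range f = {u, v}ᶜ) {σ : Perm ι} (hσ : σ ∈ pairings ι)
    (hσu : σ u = v) : ∃ τ ∈ pairings κ, extendPairing u v f τ = σ := by
  have hσv : σ v = u := by rw [← hσu, apply_apply_of_mem_pairings hσ]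
  have hrange (i : κ) : σ (f i) ∈ Set.range f := by
    rw [hr, Set.mem_compl_iff, Set.mem_insert_iff, Set.mem_singleton_iff, not_or]
    constructor
    · intro h
      exact apply_ne_right_of_range_eq_compl hr i <| by
        rw [← hσu, ← h, apply_apply_of_mem_pairings hσ]
    · intro h
      exact apply_ne_left_of_range_eq_compl hr i <| by
        rw [← hσv, ← h, apply_apply_of_mem_pairings hσ]
  choose g hg using hrange
  have hgg : Involutive g := fun i => f.injective <| by
    rw [hg, hg, apply_apply_of_mem_pairings hσ]
  refine ⟨hgg.toPerm, mem_pairings.2 ⟨Perm.ext hgg, fun i hi => ?_⟩, Perm.ext fun x => ?_⟩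
  · exact (mem_pairings.1 hσ).2 (f i) (by rw [← hg i]; exact congrArg f hi)
  · obtain rfl | rfl | ⟨i, rfl⟩ := eq_or_eq_or_mem_range_of_eq_compl hr x
    · rw [extendPairing_apply_left hr, hσu]
    · rw [extendPairing_apply_right hr, hσv]
    · exact (extendPairing_apply_image hr _ i).trans (hg i)

lemma matchingWeight_extendPairing (hr : Set.range f = {u, v}ᶜ) (huv : u < v)
    (A : Matrix ι ι R) (τ : Perm κ) :
    matchingWeight A (extendPairing u v f τ) = A u v * matchingWeight (A.submatrix f f) τ := by
  have hpairs : univ.filter (fun x => x < extendPairing u v f τ x) =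
      insert u ((univ.filter fun i => i < τ i).map f.toEmbedding) := by
    ext x
    obtain rfl | rfl | ⟨i, rfl⟩ := eq_or_eq_or_mem_range_of_eq_compl hr x
    · simp [extendPairing_apply_left hr, huv]
    · simp [extendPairing_apply_right hr, huv.ne', huv.not_gt,
        apply_ne_right_of_range_eq_compl hr]
    · simp [extendPairing_apply_image hr, apply_ne_left_of_range_eq_compl hr]
  have hu : u ∉ (univ.filter fun i => i < τ i).map f.toEmbedding := by
    simp [apply_ne_left_of_range_eq_compl hr]
  rw [matchingWeight, hpairs, prod_insert hu, prod_map, extendPairing_apply_left hr]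
  simp [matchingWeight, extendPairing_apply_image hr]

theorem sum_matchingWeight_filter_apply_eq (hr : Set.range f = {u, v}ᶜ) (huv : u < v)
    (A : Matrix ι ι R) :
    ∑ σ ∈ (pairings ι).filter (· u = v), matchingWeight A σ =
      A u v * hafnian (A.submatrix f f) := by
  rw [hafnian_eq_sum_pairings, mul_sum]
  symm
  refine sum_bij (fun τ _ => extendPairing u v f τ) (fun τ hτ => ?_)
    (fun τ₁ _ τ₂ _ h => extendPairing_injective hr h) (fun σ hσ => ?_)
    (fun τ _ => matchingWeight_extendPairing hr huv A τ |>.symm)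
  · exact mem_filter.2 ⟨extendPairing_mem_pairings hr huv.ne hτ, extendPairing_apply_left hr τ⟩
  · obtain ⟨hσ, hσu⟩ := mem_filter.1 hσ
    obtain ⟨τ, hτ, rfl⟩ := exists_extendPairing_eq hr hσ hσu
    exact ⟨τ, hτ, rfl⟩

end ExtendPairing

lemma Fin.val_succAbove_eq_ite {n : ℕ} (p : Fin (n + 1)) (i : Fin n) :
    (p.succAbove i : ℕ) = if (i : ℕ) < p then (i : ℕ) else i + 1 := by
  rcases lt_or_ge i.castSucc p with h | h
  · rw [Fin.succAbove_of_castSucc_lt _ _ h, if_pos (by simpa [Fin.lt_def] using h)]; rfl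
  · rw [Fin.succAbove_of_le_castSucc _ _ h, if_neg (by simpa [Fin.le_def] using h)]; rfl

lemma Fin.range_succAboveOrderEmb_trans {n : ℕ} (p : Fin (n + 2)) (q : Fin (n + 1)) :
    Set.range (q.succAboveOrderEmb.trans p.succAboveOrderEmb) = {p, p.succAbove q}ᶜ := by
  ext x
  simp only [RelEmbedding.coe_trans, Fin.succAboveOrderEmb_apply, Set.mem_range, comp_apply,
    Set.mem_compl_iff, Set.mem_insert_iff, Set.mem_singleton_iff, not_or]
  constructor
  · rintro ⟨y, rfl⟩
    exact ⟨Fin.succAbove_ne _ _, fun h => Fin.succAbove_ne q y (Fin.succAbove_right_injective h)⟩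
  · rintro ⟨hp, hq⟩
    obtain ⟨z, rfl⟩ := Fin.exists_succAbove_eq hp
    obtain ⟨y, rfl⟩ := Fin.exists_succAbove_eq fun h => hq (congrArg _ h)
    exact ⟨y, rfl⟩

def Matrix.eraseEdge {ι R : Type*} [DecidableEq ι] [Zero R] (A : Matrix ι ι R) (u v : ι) :
    Matrix ι ι R :=
  fun i j => if (i = u ∧ j = v) ∨ (i = v ∧ j = u) then 0 else A i j

section Expansion

variable {ι κ R : Type*} [Fintype ι] [LinearOrder ι] [Fintype κ] [LinearOrder κ]
  [CommSemiring R]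

lemma matchingWeight_eraseEdge {u v : ι} {σ : Perm ι} (hσ : σ ∈ pairings ι) (hσu : σ u ≠ v)
    (A : Matrix ι ι R) : matchingWeight (A.eraseEdge u v) σ = matchingWeight A σ := by
  refine prod_congr rfl fun i _ => if_neg ?_
  rintro (⟨rfl, h⟩ | ⟨rfl, h⟩)
  · exact hσu h
  · exact hσu (by rw [← h, apply_apply_of_mem_pairings hσ])

theorem hafnian_eq_mul_add_hafnian_eraseEdge {u v : ι} {f : κ ↪o ι}
    (hr : Set.range f = {u, v}ᶜ) (huv : u < v) (A : Matrix ι ι R) :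
    hafnian A = A u v * hafnian (A.submatrix f f) + hafnian (A.eraseEdge u v) := by
  have hsplit (B : Matrix ι ι R) : hafnian B =
      ∑ σ ∈ (pairings ι).filter (· u = v), matchingWeight B σ +
        ∑ σ ∈ (pairings ι).filter (¬ · u = v), matchingWeight B σ :=
    (sum_filter_add_sum_filter_not _ _ _).symm
  have huv0 : A.eraseEdge u v u v = 0 := if_pos (Or.inl ⟨rfl, rfl⟩)
  rw [hsplit A, hsplit (A.eraseEdge u v), sum_matchingWeight_filter_apply_eq hr huv,
    sum_matchingWeight_filter_apply_eq hr huv, huv0, zero_mul, zero_add]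
  congr 1
  refine sum_congr rfl fun σ hσ => ?_
  exact (matchingWeight_eraseEdge (mem_filter.1 hσ).1 (mem_filter.1 hσ).2 A).symm

theorem hafnian_eq_sum_mul_hafnian_submatrix {n : ℕ}
    (A : Matrix (Fin (n + 2)) (Fin (n + 2)) R) :
    hafnian A = ∑ j : Fin (n + 1), A 0 j.succ *
      hafnian (A.submatrix (Fin.succ ∘ j.succAbove) (Fin.succ ∘ j.succAbove)) := by
  rw [hafnian_eq_sum_pairings, ← sum_fiberwise (pairings _) (fun σ => σ 0), Fin.sum_univ_succ,
    filter_false_of_mem (fun σ hσ => (mem_pairings.1 hσ).2 0), sum_empty, zero_add]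
  exact sum_congr rfl fun j _ => sum_matchingWeight_filter_apply_eq
    (f := j.succAboveOrderEmb.trans (0 : Fin (n + 2)).succAboveOrderEmb)
    (Fin.range_succAboveOrderEmb_trans 0 j) (Fin.succ_pos j) A

end Expansion

section PathMatrix

variable {R : Type*} [One R]

/-- Weights of `pathMatrix` after deleting vertex `p`: the vertices `p - 1` and `p + 1` become
consecutive without being adjacent, so their weight is `1`. -/
def removeVertexWeights (w : ℕ → R) (p : ℕ) (k : ℕ) : R :=
  if k + 1 < p then w k else if k + 1 = p then 1 else w (k + 1)

lemma removeVertexWeights_update_self (w : ℕ → R) (p : ℕ) (c : R) :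
    removeVertexWeights (update w p c) p = removeVertexWeights w p := by
  ext k
  simp only [removeVertexWeights, update_apply]
  split_ifs <;> first | rfl | omega

lemma removeVertexWeights_const_zero (c : R) :
    removeVertexWeights (fun _ => c) 0 = fun _ => c := by
  ext k
  simp [removeVertexWeights]

lemma removeVertexWeights_const_succ (c : R) (q : ℕ) :
    removeVertexWeights (fun _ => c) (q + 1) = update (fun _ => c) q 1 := by
  ext k
  simp only [removeVertexWeights, update_apply]
  split_ifs <;> first | rfl | omega

lemma removeVertexWeights_update_const_succ (c : R) (q : ℕ) :
    removeVertexWeights (update (fun _ => c) q 1) (q + 1) = update (fun _ => c) q 1 := by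
  ext k
  simp only [removeVertexWeights, update_apply]
  split_ifs <;> first | rfl | omega

variable [Zero R]

def pathMatrix (w : ℕ → R) (n : ℕ) : Matrix (Fin n) (Fin n) R := fun i j =>
  if (i : ℕ) + 1 = j then w i else if (j : ℕ) + 1 = i then w j else if i = j then 0 else 1

lemma pathMatrix_congr {w w' : ℕ → R} {n : ℕ} (h : ∀ k, k + 1 < n → w k = w' k) :
    pathMatrix w n = pathMatrix w' n := by
  ext i j
  simp only [pathMatrix]
  split_ifs <;> first | rfl | exact h _ (by omega)

lemma pathMatrix_submatrix_succAbove (w : ℕ → R) {n : ℕ} (p : Fin (n + 1)) :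
    (pathMatrix w (n + 1)).submatrix p.succAbove p.succAbove =
      pathMatrix (removeVertexWeights w p) n := by
  ext i j
  simp only [Matrix.submatrix_apply, pathMatrix, removeVertexWeights, Fin.ext_iff,
    Fin.val_succAbove_eq_ite]
  split_ifs <;> first | rfl | omega

lemma pathMatrix_eraseEdge (w : ℕ → R) {n p : ℕ} (hp : p + 1 < n) :
    (pathMatrix w n).eraseEdge ⟨p, by omega⟩ ⟨p + 1, hp⟩ = pathMatrix (update w p 0) n := by
  ext i j
  simp only [Matrix.eraseEdge, pathMatrix, update_apply, Fin.ext_iff]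
  split_ifs <;> first | rfl | omega

end PathMatrix

section PathMatrixHafnian

variable {R : Type*} [CommSemiring R]

lemma hafnian_pathMatrix_update (w : ℕ → R) {n p : ℕ} (hp : p ≤ n) (c : R) :
    hafnian (pathMatrix (update w p c) (n + 2)) =
      c * hafnian (pathMatrix (removeVertexWeights (removeVertexWeights w p) p) n) +
        hafnian (pathMatrix (update w p 0) (n + 2)) := by
  let u : Fin (n + 2) := ⟨p, by omega⟩
  let q : Fin (n + 1) := ⟨p, by omega⟩
  have hv : u.succAbove q = ⟨p + 1, by omega⟩ := Fin.ext (by simp [Fin.val_succAbove_eq_ite, u, q])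
  have huv : u < u.succAbove q := by simp [hv, u, Fin.lt_def]
  rw [hafnian_eq_mul_add_hafnian_eraseEdge (Fin.range_succAboveOrderEmb_trans u q) huv, hv,
    pathMatrix_eraseEdge _ (by omega), update_idem,
    show ⇑(q.succAboveOrderEmb.trans u.succAboveOrderEmb) = u.succAbove ∘ q.succAbove from rfl,
    ← Matrix.submatrix_submatrix, pathMatrix_submatrix_succAbove, pathMatrix_submatrix_succAbove]
  simp [pathMatrix, u, q, removeVertexWeights_update_self]

lemma hafnian_pathMatrix_const_add_two (c : R) (n : ℕ) :
    hafnian (pathMatrix (fun _ => c) (n + 2)) = c * hafnian (pathMatrix (fun _ => c) n) +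
      ∑ q ∈ range n, hafnian (pathMatrix (update (fun _ => c) q 1) n) := by
  have hsub (j : Fin (n + 1)) :
      (pathMatrix (fun _ => c) (n + 2)).submatrix (Fin.succ ∘ j.succAbove) (Fin.succ ∘ j.succAbove)
        = pathMatrix (removeVertexWeights (fun _ => c) j) n := by
    rw [← Matrix.submatrix_submatrix, ← Fin.succAbove_zero, pathMatrix_submatrix_succAbove,
      pathMatrix_submatrix_succAbove, Fin.val_zero, removeVertexWeights_const_zero]
  rw [hafnian_eq_sum_mul_hafnian_submatrix, Fin.sum_univ_succ]
  simp only [hsub, Fin.val_zero, Fin.val_succ, removeVertexWeights_const_zero,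
    removeVertexWeights_const_succ]
  rw [← Fin.sum_univ_eq_sum_range (fun q => hafnian (pathMatrix (update (fun _ => c) q 1) n))]
  simp [pathMatrix, Fin.ext_iff]

lemma hafnian_pathMatrix_update_of_le (w : ℕ → R) {n q : ℕ} (hq : n ≤ q + 1) (c : R) :
    hafnian (pathMatrix (update w q c) n) = hafnian (pathMatrix w n) :=
  congrArg hafnian <| pathMatrix_congr fun _ hk => update_of_ne (by omega) _ _

end PathMatrixHafnian

section PathMatrixHafnianCommRing

variable {R : Type*} [CommRing R]

lemma hafnian_pathMatrix_update_const_one (c : R) {n p : ℕ} (hp : p ≤ n) :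
    hafnian (pathMatrix (update (fun _ => c) p 1) (n + 2)) =
      hafnian (pathMatrix (fun _ => c) (n + 2)) - (c - 1) *
        hafnian (pathMatrix (removeVertexWeights (removeVertexWeights (fun _ => c) p) p) n) := by
  have hone := hafnian_pathMatrix_update (fun _ => c) hp 1
  have hc := hafnian_pathMatrix_update (fun _ => c) hp c
  rw [update_eq_self] at hc
  linear_combination hone - hc

theorem hafnian_pathMatrix_const_add_four (c : R) (n : ℕ) :
    hafnian (pathMatrix (fun _ => c) (n + 4)) =
      (n + 3) * hafnian (pathMatrix (fun _ => c) (n + 2)) +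
        (c - 1) ^ 2 * hafnian (pathMatrix (fun _ => c) n) := by
  let H (k : ℕ) : R := hafnian (pathMatrix (fun _ => c) k)
  let D (k q : ℕ) : R := hafnian (pathMatrix (update (fun _ => c) q 1) k)
  have hexp : H (n + 4) = c * H (n + 2) + ∑ q ∈ range (n + 2), D (n + 2) q :=
    hafnian_pathMatrix_const_add_two c (n + 2)
  have hexp' : H (n + 2) = c * H n + ∑ q ∈ range n, D n q :=
    hafnian_pathMatrix_const_add_two c n
  have hfirst : D (n + 2) 0 = H (n + 2) - (c - 1) * H n := by
    simpa only [removeVertexWeights_const_zero] using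
      hafnian_pathMatrix_update_const_one c (Nat.zero_le n)
  have hmid (p : ℕ) (hp : p < n) : D (n + 2) (p + 1) = H (n + 2) - (c - 1) * D n p := by
    simpa only [removeVertexWeights_const_succ, removeVertexWeights_update_const_succ] using
      hafnian_pathMatrix_update_const_one c (Nat.succ_le_of_lt hp)
  have hlast : D (n + 2) (n + 1) = H (n + 2) := hafnian_pathMatrix_update_of_le _ le_rfl 1
  rw [sum_range_succ, sum_range_succ', sum_congr rfl fun p hp => hmid p (mem_range.1 hp),
    sum_sub_distrib, ← mul_sum, sum_const, card_range, nsmul_eq_mul, hfirst, hlast] at hexp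
  exact hexp.trans (by linear_combination (c - 1) * hexp')

end PathMatrixHafnianCommRing

section Bessel

open Nat

def besselCoeff (n k : ℕ) : ℕ := (n + k).choose (2 * k) * (2 * k - 1)‼

def besselAtOne (n : ℕ) : ℕ := ∑ k ∈ range (n + 1), besselCoeff n k

lemma besselCoeff_eq_factorial_div {n k : ℕ} (hk : k ≤ n) :
    besselCoeff n k = (n + k)! / (k ! * (n - k)! * 2 ^ k) := by
  obtain rfl | hk0 := k.eq_zero_or_pos
  · simp [besselCoeff, Nat.div_self (factorial_pos n)]
  have hfac : (2 * k)! = (2 * k - 1)‼ * (k ! * 2 ^ k) := by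
    rw [show 2 * k = 2 * k - 1 + 1 by omega, factorial_eq_mul_doubleFactorial,
      show 2 * k - 1 + 1 = 2 * k by omega, doubleFactorial_two_mul]
    ring
  have hchoose := choose_mul_factorial_mul_factorial (show 2 * k ≤ n + k by omega)
  rw [show n + k - 2 * k = n - k by omega] at hchoose
  rw [← hchoose, hfac, besselCoeff]
  exact (Nat.div_eq_of_eq_mul_left (by positivity) (by ring)).symm

lemma besselCoeff_of_lt {n k : ℕ} (h : n < k) : besselCoeff n k = 0 := by
  rw [besselCoeff, choose_eq_zero_of_lt (by omega), zero_mul]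

lemma besselCoeff_add_two_succ {n k : ℕ} (hk : k ≤ n + 1) :
    besselCoeff (n + 2) (k + 1) = (2 * n + 3) * besselCoeff (n + 1) k + besselCoeff n (k + 1) := by
  have hpascal : (n + k + 3).choose (2 * k + 2) =
      (n + k + 1).choose (2 * k) + 2 * (n + k + 1).choose (2 * k + 1) +
        (n + k + 1).choose (2 * k + 2) := by
    simp only [choose_succ_succ, show n + k + 3 = n + k + 1 + 1 + 1 by ring,
      show 2 * k + 2 = 2 * k + 1 + 1 by ring]
    ring
  have habsorb : (n + k + 1).choose (2 * k + 1) * (2 * k + 1) =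
      (n + k + 1).choose (2 * k) * (n + 1 - k) := by
    rw [choose_succ_right_eq]
    congr 1
    omega
  have hsub : (n + 1 - k) + k = n + 1 := by omega
  rw [besselCoeff, besselCoeff, besselCoeff, show n + 2 + (k + 1) = n + k + 3 by ring,
    show 2 * (k + 1) = 2 * k + 2 by ring, show n + 1 + k = n + k + 1 by ring,
    show n + (k + 1) = n + k + 1 by ring, hpascal, show 2 * k + 2 - 1 = 2 * k + 1 by omega,
    doubleFactorial_add_one]
  zify at habsorb hsub ⊢
  linear_combination (2 * ((2 * k - 1)‼ : ℤ)) * habsorb +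
    (2 * ((n + k + 1).choose (2 * k) : ℤ) * ((2 * k - 1)‼ : ℤ)) * hsub

lemma besselAtOne_eq_sum_add_one (n : ℕ) :
    besselAtOne n = ∑ k ∈ range n, besselCoeff n (k + 1) + 1 := by
  simp [besselAtOne, sum_range_succ', besselCoeff]

lemma besselAtOne_add_two (n : ℕ) :
    besselAtOne (n + 2) = (2 * n + 3) * besselAtOne (n + 1) + besselAtOne n := by
  have htail : ∑ k ∈ range (n + 2), besselCoeff n (k + 1) =
      ∑ k ∈ range n, besselCoeff n (k + 1) := by
    rw [sum_range_succ, sum_range_succ, besselCoeff_of_lt (by omega),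
      besselCoeff_of_lt (by omega), add_zero, add_zero]
  rw [besselAtOne_eq_sum_add_one, sum_congr rfl fun k hk =>
      besselCoeff_add_two_succ (Nat.lt_succ_iff.1 (mem_range.1 hk)),
    sum_add_distrib, ← mul_sum, htail, besselAtOne_eq_sum_add_one n, add_assoc]
  rfl

end Bessel

theorem hafnian_pathMatrix_const_two_two_mul {R : Type*} [CommRing R] (m : ℕ) :
    hafnian (pathMatrix (fun _ => (2 : R)) (2 * m)) = besselAtOne m := by
  induction m using Nat.twoStepInduction with
  | zero =>
    simpa [besselAtOne, besselCoeff] using hafnian_of_isEmpty (pathMatrix (fun _ => (2 : R)) 0)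
  | one =>
    simp [hafnian_pathMatrix_const_add_two, hafnian_of_isEmpty, besselAtOne, besselCoeff,
      sum_range_succ]
  | more n ih₀ ih₁ =>
    rw [show 2 * (n + 2) = 2 * n + 4 by ring, hafnian_pathMatrix_const_add_four,
      show 2 * n + 2 = 2 * (n + 1) by ring, ih₀, ih₁, besselAtOne_add_two]
    push_cast
    ring

lemma T21_eq_pathMatrix (m : ℕ) : T21 m = pathMatrix (fun _ => 2) (2 * m) := by
  ext i j
  simp only [T21, pathMatrix, Fin.ext_iff]
  split_ifs <;> first | rfl | omega

/-- For every `m ≥ 1`, `Hf(T_{2,1}) = Σ_{k=0}^{m} (m+k)!/(k!·(m−k)!·2^k)`;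
in particular, for `m = 1, 2, 3, 4, 5, 6` these values are
`2, 7, 37, 266, 2431, 27007`. -/
theorem hafnian_T21 :
    (∀ m : ℕ, 0 < m →
      hafnian (T21 m) =
        ∑ k ∈ Finset.range (m + 1),
          ((Nat.factorial (m + k) /
            (Nat.factorial k * Nat.factorial (m - k) * 2 ^ k) : ℕ) : ℤ)) ∧
    hafnian (T21 1) = 2 ∧ hafnian (T21 2) = 7 ∧ hafnian (T21 3) = 37 ∧
    hafnian (T21 4) = 266 ∧ hafnian (T21 5) = 2431 ∧ hafnian (T21 6) = 27007 := by
  have hT (m : ℕ) : hafnian (T21 m) = besselAtOne m := by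
    rw [T21_eq_pathMatrix, hafnian_pathMatrix_const_two_two_mul]
  refine ⟨fun m _ => ?_, ?_, ?_, ?_, ?_, ?_, ?_⟩
  · rw [hT, besselAtOne, Nat.cast_sum]
    exact sum_congr rfl fun k hk =>
      congrArg _ (besselCoeff_eq_factorial_div (Nat.lt_succ_iff.1 (mem_range.1 hk)))
  all_goals rw [hT]; decide
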